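/- Fix a prime p (congruence subgroup property for the lamplighter group). Let N be a finite-index normal subgroup of the p-lamplighter group L. Then there exist a nonzero polynomial g(t) ∈ 𝔽_p[t] and an integer k ≥ 1 such that the set K = { (a, m) ∈ L : a lies in the ideal of 𝔽_p[t,t⁻¹] generated by g(t), and k divides m } is a finite-index normal subgroup of L contained in N. (K is the kernel of the natural surjection L → (𝔽_p[t,t⁻¹]/(g(t))) ⋊ ℤ/kℤ, so every finite-index subgroup of L is a congruence subgroup.) -/

import Mathlib

open LaurentPolynomial Pointwise

noncomputable def lampAut (p : ℕ) (z : ℤ) : AddAut (LaurentPolynomial (ZMod p)) where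
  toFun f := T z * f
  invFun f := T (-z) * f
  left_inv f := by
    show T (-z) * (T z * f) = f
    rw [← mul_assoc, ← T_add]; simp
  right_inv f := by
    show T z * (T (-z) * f) = f
    rw [← mul_assoc, ← T_add]; simp
  map_add' f g := mul_add _ _ _

/-- The action of `ℤ` on (the multiplicative version of) `𝔽_p[t,t⁻¹]` by `f(t) ↦ t^z·f(t)`. -/
noncomputable def lampAction (p : ℕ) :
    Multiplicative ℤ →* MulAut (Multiplicative (LaurentPolynomial (ZMod p))) where
  toFun z := AddEquiv.toMultiplicative (lampAut p z.toAdd)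
  map_one' := by
    ext f : 1
    show Multiplicative.ofAdd (T ((1 : Multiplicative ℤ).toAdd) * f.toAdd) = f
    simp
  map_mul' x y := by
    ext f : 1
    show Multiplicative.ofAdd (T ((x * y).toAdd) * f.toAdd)
      = Multiplicative.ofAdd (T x.toAdd * (T y.toAdd * f.toAdd))
    rw [← mul_assoc, ← T_add]
    rfl

/-- The `p`-lamplighter group `L = 𝔽_p[t,t⁻¹] ⋊ ℤ`. -/
noncomputable abbrev Lamplighter (p : ℕ) :=
  SemidirectProduct (Multiplicative (LaurentPolynomial (ZMod p))) (Multiplicative ℤ) (lampAction p)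

/-- The element `(f(t), n)` of the lamplighter group. -/
noncomputable def lampMk (p : ℕ) (f : LaurentPolynomial (ZMod p)) (n : ℤ) : Lamplighter p :=
  ⟨Multiplicative.ofAdd f, Multiplicative.ofAdd n⟩

/-- The generator `s₀ = (1, 0)`. -/
noncomputable def lampS (p : ℕ) : Lamplighter p := lampMk p 1 0

/-- The generator `t = (0, 1)`. -/
noncomputable def lampT (p : ℕ) : Lamplighter p := lampMk p 0 1

/-- The set `{1, s₀, s₀⁻¹, t, t⁻¹}`; membership of `g` in its `n`-th pointwise power
says exactly that `g` is a product of at most `n` elements of `{s₀, s₀⁻¹, t, t⁻¹}`,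
i.e. that `g` has word length at most `n` with respect to `X = {s₀, t}`. -/
noncomputable def lampGen (p : ℕ) : Set (Lamplighter p) :=
  {1, lampS p, (lampS p)⁻¹, lampT p, (lampT p)⁻¹}



section LampCSPAux

open Polynomial

variable {p : ℕ}

private lemma lampCSP_T_sub_one_mem {k : ℕ} {j : ℤ} (h : (k : ℤ) ∣ j) :
    (T j - 1 : LaurentPolynomial (ZMod p)) ∈
      Ideal.span {(T (k : ℤ) - 1 : LaurentPolynomial (ZMod p))} := by
  set I := Ideal.span {(T (k : ℤ) - 1 : LaurentPolynomial (ZMod p))} with hI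
  have hgen : (T (k : ℤ) - 1 : LaurentPolynomial (ZMod p)) ∈ I := Ideal.subset_span rfl
  obtain ⟨q, rfl⟩ := h
  induction q using Int.induction_on with
  | zero => simp
  | succ q ih =>
      have e : (T ((k:ℤ) * ((q:ℤ) + 1)) - 1 : LaurentPolynomial (ZMod p))
          = T ((k:ℤ) * (q:ℤ)) * (T (k:ℤ) - 1) + (T ((k:ℤ) * (q:ℤ)) - 1) := by
        have e1 : (k:ℤ) * ((q:ℤ) + 1) = (k:ℤ) * (q:ℤ) + k := by ring
        rw [e1, mul_sub, mul_one, ← T_add]; ring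
      rw [e]
      exact I.add_mem (Ideal.mul_mem_left _ _ hgen) ih
  | pred q ih =>
      have e : (T ((k:ℤ) * (-(q:ℤ) - 1)) - 1 : LaurentPolynomial (ZMod p))
          = -(T ((k:ℤ) * (-(q:ℤ) - 1)) * (T (k:ℤ) - 1)) + (T ((k:ℤ) * (-(q:ℤ))) - 1) := by
        have e1 : (k:ℤ) * (-(q:ℤ) - 1) + k = (k:ℤ) * (-(q:ℤ)) := by ring
        have e2 : (T ((k:ℤ) * (-(q:ℤ))) : LaurentPolynomial (ZMod p))
            = T ((k:ℤ) * (-(q:ℤ) - 1)) * T (k:ℤ) := by rw [← T_add, e1]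
        rw [e2]; ring
      rw [e]
      exact I.add_mem (I.neg_mem (Ideal.mul_mem_left _ _ hgen)) ih

private lemma lampCSP_finite_quot [Fact p.Prime] {k : ℕ} (hk : k ≠ 0) :
    Finite (LaurentPolynomial (ZMod p) ⧸
      Ideal.span {(T (k : ℤ) - 1 : LaurentPolynomial (ZMod p))}) := by
  set I := Ideal.span {(T (k : ℤ) - 1 : LaurentPolynomial (ZMod p))} with hI
  have hgen : (T (k : ℤ) - 1 : LaurentPolynomial (ZMod p)) ∈ I := Ideal.subset_span rfl
  set g : Polynomial (ZMod p) := X ^ k - 1 with hg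
  have hmonic : g.Monic := by simpa [hg] using monic_X_pow_sub_C (1 : ZMod p) hk
  have hgl : toLaurent g = T (k:ℤ) - 1 := by simp [hg]
  set qmap : Polynomial (ZMod p) →+* (LaurentPolynomial (ZMod p) ⧸ I) :=
    (Ideal.Quotient.mk I).comp toLaurent with hqmap
  have hsurj : Function.Surjective qmap := by
    intro y
    obtain ⟨f, rfl⟩ := Ideal.Quotient.mk_surjective y
    obtain ⟨n, f', hf⟩ := f.exists_T_pow
    refine ⟨f' * X ^ (n * (k - 1)), ?_⟩
    have hcast : ((n * (k - 1) : ℕ) : ℤ) = (n : ℤ) * ((k : ℤ) - 1) := by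
      push_cast [Nat.cast_sub (Nat.one_le_iff_ne_zero.mpr hk)]
      ring
    have e1 : toLaurent (f' * X ^ (n * (k - 1))) = f * T ((n:ℤ) * (k:ℤ)) := by
      rw [map_mul, hf, toLaurent_X_pow, hcast, mul_assoc, ← T_add]
      congr 1
      ring
    show Ideal.Quotient.mk I (toLaurent (f' * X ^ (n * (k - 1)))) = Ideal.Quotient.mk I f
    rw [e1, Ideal.Quotient.mk_eq_mk_iff_sub_mem]
    have e2 : f * T ((n:ℤ) * (k:ℤ)) - f = (T ((n:ℤ) * (k:ℤ)) - 1) * f := by ring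
    rw [e2]
    exact Ideal.mul_mem_right _ _ (lampCSP_T_sub_one_mem ⟨n, by ring⟩)
  have h0 : ∀ a ∈ Ideal.span {g}, qmap a = 0 := by
    intro a ha
    obtain ⟨c, rfl⟩ := Ideal.mem_span_singleton.mp ha
    have : qmap g = 0 := by
      show Ideal.Quotient.mk I (toLaurent g) = 0
      rw [hgl, Ideal.Quotient.eq_zero_iff_mem]
      exact hgen
    rw [map_mul, this, zero_mul]
  have hfin1 : Module.Finite (ZMod p) (AdjoinRoot g) := (AdjoinRoot.powerBasis' hmonic).finite
  have hfin2 : Finite (AdjoinRoot g) := Module.finite_of_finite (ZMod p)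
  have hfin3 : Finite (Polynomial (ZMod p) ⧸ Ideal.span {g}) := hfin2
  have hls : Function.Surjective (Ideal.Quotient.lift (Ideal.span {g}) qmap h0) := by
    intro y
    obtain ⟨a, ha⟩ := hsurj y
    exact ⟨Ideal.Quotient.mk _ a, by simpa using ha⟩
  exact Finite.of_surjective _ hls

end LampCSPAux

/-- **Congruence subgroup property for the lamplighter group.** If `N` is a finite-index
normal subgroup of the `p`-lamplighter group `L`, then there are a nonzero polynomial
`g(t) ∈ 𝔽_p[t]` and an integer `k ≥ 1` such that the set
`K = {(a, m) ∈ L : a ∈ (g(t)) and k ∣ m}` is a finite-index normal subgroup of `L`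
contained in `N` (`K` is the kernel of `L → (𝔽_p[t,t⁻¹]/(g(t))) ⋊ ℤ/kℤ`, so every
finite-index subgroup of `L` is a congruence subgroup). -/
theorem lamplighter_congruence_subgroup_property (p : ℕ) (hp : p.Prime)
    (N : Subgroup (Lamplighter p)) (hN : N.Normal) (hfin : N.index ≠ 0) :
    ∃ (g : Polynomial (ZMod p)) (k : ℕ), g ≠ 0 ∧ 1 ≤ k ∧
      ∃ K : Subgroup (Lamplighter p),
        (∀ x : Lamplighter p, x ∈ K ↔
          (x.left.toAdd ∈ Ideal.span {Polynomial.toLaurent g} ∧ (k : ℤ) ∣ x.right.toAdd)) ∧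
        K.Normal ∧ K.index ≠ 0 ∧ K ≤ N := by
  haveI : Fact p.Prime := ⟨hp⟩
  haveI : N.FiniteIndex := ⟨hfin⟩
  set k := N.index with hkdef
  have hk0 : k ≠ 0 := hfin
  haveI : NeZero k := ⟨hk0⟩
  set g : Polynomial (ZMod p) := Polynomial.X ^ k - 1 with hgdef
  have hmonic : g.Monic := by simpa [hgdef] using Polynomial.monic_X_pow_sub_C (1 : ZMod p) hk0
  have hgl : Polynomial.toLaurent g = T (k:ℤ) - 1 := by simp [hgdef]
  set I : Ideal (LaurentPolynomial (ZMod p)) := Ideal.span {Polynomial.toLaurent g} with hIdef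
  have hIeq : I = Ideal.span {(T (k:ℤ) - 1 : LaurentPolynomial (ZMod p))} := by rw [hIdef, hgl]
  have hTmem : ∀ {j : ℤ}, (k:ℤ) ∣ j → (T j - 1 : LaurentPolynomial (ZMod p)) ∈ I := by
    intro j hj
    rw [hIeq]
    exact lampCSP_T_sub_one_mem hj
  -- the subgroup K
  let K : Subgroup (Lamplighter p) :=
  { carrier := {x | x.left.toAdd ∈ I ∧ (k:ℤ) ∣ x.right.toAdd}
    one_mem' := ⟨I.zero_mem, dvd_zero _⟩
    mul_mem' := by
      rintro a b ⟨ha1, ha2⟩ ⟨hb1, hb2⟩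
      refine ⟨?_, ?_⟩
      · show a.left.toAdd + T a.right.toAdd * b.left.toAdd ∈ I
        exact I.add_mem ha1 (Ideal.mul_mem_left _ _ hb1)
      · show (k:ℤ) ∣ a.right.toAdd + b.right.toAdd
        exact dvd_add ha2 hb2
    inv_mem' := by
      rintro a ⟨ha1, ha2⟩
      refine ⟨?_, ?_⟩
      · show T (-a.right.toAdd) * (-a.left.toAdd) ∈ I
        exact Ideal.mul_mem_left _ _ (I.neg_mem ha1)
      · show (k:ℤ) ∣ -a.right.toAdd
        exact dvd_neg.mpr ha2 }
  have hKmem : ∀ x : Lamplighter p, x ∈ K ↔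
      (x.left.toAdd ∈ I ∧ (k : ℤ) ∣ x.right.toAdd) := fun x => Iff.rfl
  -- normality
  have hKnormal : K.Normal := by
    constructor
    intro n hn x
    obtain ⟨h1, h2⟩ := hn
    refine ⟨?_, ?_⟩
    · show (x * n * x⁻¹).left.toAdd ∈ I
      have e0 : (x * n * x⁻¹).left.toAdd
          = (x.left.toAdd + T x.right.toAdd * n.left.toAdd)
            + T (x.right.toAdd + n.right.toAdd) * (T (-x.right.toAdd) * (-x.left.toAdd)) := rfl
      have e1 : x.right.toAdd + n.right.toAdd + -x.right.toAdd = n.right.toAdd := by ring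
      have e2 : (x * n * x⁻¹).left.toAdd
          = T x.right.toAdd * n.left.toAdd - (T n.right.toAdd - 1) * x.left.toAdd := by
        rw [e0, ← mul_assoc, ← T_add, e1]
        ring
      rw [e2]
      exact I.sub_mem (Ideal.mul_mem_left _ _ h1) (Ideal.mul_mem_right _ _ (hTmem h2))
    · show (k:ℤ) ∣ (x * n * x⁻¹).right.toAdd
      have e0 : (x * n * x⁻¹).right.toAdd
          = x.right.toAdd + n.right.toAdd + -x.right.toAdd := rfl
      have e1 : x.right.toAdd + n.right.toAdd + -x.right.toAdd = n.right.toAdd := by ring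
      rw [e0, e1]
      exact h2
  -- t^k ∈ N
  have ht : SemidirectProduct.inr (Multiplicative.ofAdd (k:ℤ)) ∈ N := by
    have h1 : lampT p ^ k = SemidirectProduct.inr (Multiplicative.ofAdd (k:ℤ)) := by
      rw [show lampT p = SemidirectProduct.inr (Multiplicative.ofAdd (1:ℤ)) from rfl, ← map_pow]
      congr 1
      rw [← ofAdd_nsmul]
      norm_num
    rw [← h1]
    exact N.pow_index_mem (lampT p)
  -- (f, 0) ∈ N for f in the ideal generated by T^k - 1
  have hinl : ∀ c : LaurentPolynomial (ZMod p),
      SemidirectProduct.inl (Multiplicative.ofAdd ((T (k:ℤ) - 1) * c)) ∈ N := by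
    intro c
    have hconj : SemidirectProduct.inl (Multiplicative.ofAdd (T (k:ℤ) * c))
        = SemidirectProduct.inr (Multiplicative.ofAdd (k:ℤ))
          * SemidirectProduct.inl (Multiplicative.ofAdd c)
          * SemidirectProduct.inr ((Multiplicative.ofAdd (k:ℤ))⁻¹) :=
      SemidirectProduct.inl_aut (φ := lampAction p) (Multiplicative.ofAdd (k:ℤ))
        (Multiplicative.ofAdd c)
    have e1 : Multiplicative.ofAdd ((T (k:ℤ) - 1) * c)
        = Multiplicative.ofAdd (T (k:ℤ) * c) * (Multiplicative.ofAdd c)⁻¹ := by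
      rw [sub_mul, one_mul, sub_eq_add_neg]
      rfl
    rw [e1, map_mul, map_inv, hconj, map_inv]
    set u := SemidirectProduct.inr (φ := lampAction p) (Multiplicative.ofAdd (k:ℤ)) with hu
    set v := SemidirectProduct.inl (φ := lampAction p) (Multiplicative.ofAdd c) with hv
    have e2 : u * v * u⁻¹ * v⁻¹ = u * (v * u⁻¹ * v⁻¹) := by group
    rw [e2]
    exact N.mul_mem ht (hN.conj_mem _ (N.inv_mem ht) v)
  -- K ≤ N
  have hKN : K ≤ N := by
    intro x hx
    obtain ⟨h1, h2⟩ := hx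
    have hx' : x = SemidirectProduct.inl x.left * SemidirectProduct.inr x.right :=
      (SemidirectProduct.inl_left_mul_inr_right x).symm
    rw [hx']
    refine N.mul_mem ?_ ?_
    · rw [hIeq, Ideal.mem_span_singleton] at h1
      obtain ⟨c, hc⟩ := h1
      have : x.left = Multiplicative.ofAdd ((T (k:ℤ) - 1) * c) := by
        rw [← hc]
        rfl
      rw [this]
      exact hinl c
    · obtain ⟨q, hq⟩ := h2
      have : x.right = (Multiplicative.ofAdd (k:ℤ)) ^ q := by
        rw [← ofAdd_zsmul]
        show Multiplicative.ofAdd x.right.toAdd = _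
        rw [hq]
        congr 1
        simp [mul_comm]
      rw [this, map_zpow]
      exact Subgroup.zpow_mem N ht q
  -- finite index
  haveI hfinQ : Finite (LaurentPolynomial (ZMod p) ⧸ I) := by
    rw [hIeq]
    exact lampCSP_finite_quot hk0
  have hKindex : K.index ≠ 0 := by
    let F : Lamplighter p → (LaurentPolynomial (ZMod p) ⧸ I) × ZMod k :=
      fun x => (Ideal.Quotient.mk I x.left.toAdd, ((x.right.toAdd : ℤ) : ZMod k))
    have hFiff : ∀ a b : Lamplighter p, F a = F b ↔ a⁻¹ * b ∈ K := by
      intro a b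
      have eL : (a⁻¹ * b).left.toAdd
          = T (-a.right.toAdd) * (b.left.toAdd - a.left.toAdd) := by
        show T (-a.right.toAdd) * (-a.left.toAdd) + T (-a.right.toAdd) * b.left.toAdd = _
        ring
      have eR : (a⁻¹ * b).right.toAdd = -a.right.toAdd + b.right.toAdd := rfl
      constructor
      · rintro hFab
        have h1 : Ideal.Quotient.mk I a.left.toAdd = Ideal.Quotient.mk I b.left.toAdd :=
          congrArg Prod.fst hFab
        have h2 : ((a.right.toAdd : ℤ) : ZMod k) = ((b.right.toAdd : ℤ) : ZMod k) :=
          congrArg Prod.snd hFab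
        rw [Ideal.Quotient.mk_eq_mk_iff_sub_mem] at h1
        have h2' : (k:ℤ) ∣ b.right.toAdd - a.right.toAdd :=
          ((ZMod.intCast_eq_intCast_iff _ _ _).mp h2).dvd
        refine ⟨?_, ?_⟩
        · rw [eL]
          exact Ideal.mul_mem_left _ _ (by simpa using I.neg_mem h1)
        · rw [eR, neg_add_eq_sub]
          exact h2'
      · rintro ⟨h1, h2⟩
        rw [eL] at h1
        rw [eR, neg_add_eq_sub] at h2
        have h1' : b.left.toAdd - a.left.toAdd ∈ I := by
          have := Ideal.mul_mem_left _ (T a.right.toAdd) h1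
          rwa [← mul_assoc, ← T_add, add_neg_cancel, T_zero, one_mul] at this
        refine Prod.ext ?_ ?_
        · show Ideal.Quotient.mk I a.left.toAdd = Ideal.Quotient.mk I b.left.toAdd
          rw [Ideal.Quotient.mk_eq_mk_iff_sub_mem]
          simpa using I.neg_mem h1'
        · show ((a.right.toAdd : ℤ) : ZMod k) = ((b.right.toAdd : ℤ) : ZMod k)
          rw [ZMod.intCast_eq_intCast_iff]
          exact Int.modEq_iff_dvd.mpr h2
    let Fbar : (Lamplighter p ⧸ K) → (LaurentPolynomial (ZMod p) ⧸ I) × ZMod k :=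
      Quotient.lift F (fun a b h => (hFiff a b).mpr (QuotientGroup.leftRel_apply.mp h))
    have hinj : Function.Injective Fbar := by
      intro x y
      induction x using Quotient.ind
      induction y using Quotient.ind
      intro h
      exact Quotient.sound (QuotientGroup.leftRel_apply.mpr ((hFiff _ _).mp h))
    have : Finite (Lamplighter p ⧸ K) := Finite.of_injective Fbar hinj
    exact Subgroup.index_ne_zero_of_finite
  exact ⟨g, k, hmonic.ne_zero, Nat.one_le_iff_ne_zero.mpr hk0, K, hKmem, hKnormal, hKindex, hKN⟩
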